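/- For each parallel class i and integer k, the set of triangles lying on one side of hyperplane H_{i,k} (i.e., with i-th cubulation coordinate ≥ k+1) and the complementary set (coordinate ≤ k) are each edge-connected, and every dual-graph edge between the two sets crosses H_{i,k}; thus removing all dual-graph edges crossing H_{i,k} disconnects the dual graph into exactly two components (halfspaces). -/

import Mathlib

noncomputable def lineF : Fin 3 → ℝ × ℝ → ℝ := fun i p =>
  if i = 0 then p.2 - 1/3
  else if i = 1 then (Real.sqrt 3 * p.1 - p.2) / 2 - 1/3
  else -(Real.sqrt 3 * p.1 + p.2) / 2 - 1/3

def triRegion (v : Fin 3 → ℤ) : Set (ℝ × ℝ) :=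
  {p | ∀ i : Fin 3, ((v i : ℝ) - 1 ≤ lineF i p ∧ lineF i p ≤ (v i : ℝ))}

def IsTile (v : Fin 3 → ℤ) : Prop := (interior (triRegion v)).Nonempty

abbrev Tile : Type := {v : Fin 3 → ℤ // IsTile v}

def Tile.region (T : Tile) : Set (ℝ × ℝ) := triRegion T.val

def EdgeAdj (T U : Tile) : Prop := T ≠ U ∧ ¬ (T.region ∩ U.region).Subsingleton

def VertexAdj (T U : Tile) : Prop := T ≠ U ∧ (T.region ∩ U.region).Nonempty

def sumv (v : Fin 3 → ℤ) : ℤ := v 0 + v 1 + v 2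

def dualGraph : SimpleGraph Tile where
  Adj := EdgeAdj
  symm := ⟨fun T U h => ⟨h.1.symm, fun hs => h.2 (by rwa [Set.inter_comm] at hs)⟩⟩
  loopless := ⟨fun T h => h.1 rfl⟩

/-- A set of triangles is edge-connected if any two of its members are joined by a
chain in the set of triangles successively sharing an edge. -/
def EdgeConnSet (A : Set Tile) : Prop :=
  ∀ T ∈ A, ∀ U ∈ A, Relation.ReflTransGen (fun x y : Tile => x ∈ A ∧ y ∈ A ∧ EdgeAdj x y) T U

/-- A set of triangles is vertex-connected if any two of its members are joined by a
chain in the set of triangles successively sharing at least a vertex. -/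
def VertexConnSet (A : Set Tile) : Prop :=
  ∀ T ∈ A, ∀ U ∈ A, Relation.ReflTransGen (fun x y : Tile => x ∈ A ∧ y ∈ A ∧ VertexAdj x y) T U

/-- The dual graph with all edges crossing the hyperplane `H_{i,k}` removed. -/
def cutGraph (i : Fin 3) (k : ℤ) : SimpleGraph Tile where
  Adj T U := EdgeAdj T U ∧ ¬(T.val i = k ∧ U.val i = k + 1) ∧ ¬(U.val i = k ∧ T.val i = k + 1)
  symm := ⟨fun T U h => ⟨dualGraph.adj_symm h.1, h.2.2, h.2.1⟩⟩
  loopless := ⟨fun T h => h.1.1 rfl⟩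

/-
Tiles are exactly the integer vectors of coordinate sum `0` (downward triangles) and `1` (upward
triangles), and a downward triangle `v` shares an edge with each upward triangle `v + e_j`.
Recording a tile by its `i`-th and `(i+1)`-st coordinates, the downward triangles with `i`-th
coordinate in an interval form a grid whose horizontal and vertical neighbours are linked through
an upward triangle of the same slab, so every slab `{T | T i ∈ S}`, `S` order-connected, is
edge-connected. Two tiles that meet have coordinates differing by at most one, so every dual edge
between the halfspaces `T i ≤ k` and `T i ≥ k + 1` goes from `k` to `k + 1`, i.e. crosses
`H_{i,k}`.
-/
@[simp] lemma lineF_zero (p : ℝ × ℝ) : lineF 0 p = p.2 - 1 / 3 := by simp [lineF]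
@[simp] lemma lineF_one (p : ℝ × ℝ) : lineF 1 p = (Real.sqrt 3 * p.1 - p.2) / 2 - 1 / 3 := by
  simp [lineF]
@[simp] lemma lineF_two (p : ℝ × ℝ) : lineF 2 p = -(Real.sqrt 3 * p.1 + p.2) / 2 - 1 / 3 := by
  simp [lineF]

lemma lineF_sum (p : ℝ × ℝ) : lineF 0 p + lineF 1 p + lineF 2 p = -1 := by
  simp only [lineF_zero, lineF_one, lineF_two]; ring

lemma continuous_lineF (i : Fin 3) : Continuous (lineF i) := by
  unfold lineF; split_ifs <;> fun_prop

lemma exists_lineF_eq (t : Fin 3 → ℝ) (ht : t 0 + t 1 + t 2 = -1) :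
    ∃ p : ℝ × ℝ, ∀ i, lineF i p = t i := by
  refine ⟨((2 * t 1 + t 0 + 1) / Real.sqrt 3, t 0 + 1 / 3), fun i => ?_⟩
  have hc : Real.sqrt 3 * ((2 * t 1 + t 0 + 1) / Real.sqrt 3) = 2 * t 1 + t 0 + 1 :=
    mul_div_cancel₀ _ (by positivity)
  fin_cases i <;> simp only [Fin.zero_eta, Fin.mk_one, Fin.reduceFinMk, lineF_zero, lineF_one,
    lineF_two, hc] <;> linarith

lemma eq_of_lineF_eq {p q : ℝ × ℝ} (h0 : lineF 0 p = lineF 0 q) (h1 : lineF 1 p = lineF 1 q) :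
    p = q := by
  simp only [lineF_zero, lineF_one] at h0 h1
  have h2 : p.2 = q.2 := by linarith
  have h3 : Real.sqrt 3 * p.1 = Real.sqrt 3 * q.1 := by linarith
  exact Prod.ext (mul_left_cancel₀ (by positivity) h3) h2

lemma triRegion_subsingleton {v : Fin 3 → ℤ} (hv : sumv v = -1 ∨ sumv v = 2) :
    (triRegion v).Subsingleton := by
  have hv' : ((v 0 + v 1 + v 2 : ℤ) : ℝ) = -1 ∨ ((v 0 + v 1 + v 2 : ℤ) : ℝ) = 2 := by
    unfold sumv at hv; rcases hv with h | h <;> simp [h]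
  push_cast at hv'
  -- summing the bounds on one side gives an equality, so each of these bounds is attained
  intro p hp q hq
  have := lineF_sum p
  have := lineF_sum q
  obtain ⟨⟨_, _⟩, ⟨_, _⟩, ⟨_, _⟩⟩ : _ ∧ _ ∧ _ := ⟨hp 0, hp 1, hp 2⟩
  obtain ⟨⟨_, _⟩, ⟨_, _⟩, ⟨_, _⟩⟩ : _ ∧ _ ∧ _ := ⟨hq 0, hq 1, hq 2⟩
  apply eq_of_lineF_eq <;> rcases hv' with h | h <;> linarith

lemma isTile_iff (v : Fin 3 → ℤ) : IsTile v ↔ sumv v = 0 ∨ sumv v = 1 := by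
  have hsum : ((sumv v : ℤ) : ℝ) = v 0 + v 1 + v 2 := by push_cast [sumv]; ring
  constructor
  · rintro ⟨p, hp⟩
    have hp' := interior_subset hp
    have hs := lineF_sum p
    have hlo : (-1 : ℝ) ≤ sumv v := by linarith [(hp' 0).2, (hp' 1).2, (hp' 2).2]
    have hhi : (sumv v : ℝ) ≤ 2 := by linarith [(hp' 0).1, (hp' 1).1, (hp' 2).1]
    have hlo' : -1 ≤ sumv v := by exact_mod_cast hlo
    have hhi' : sumv v ≤ 2 := by exact_mod_cast hhi
    by_contra hne
    have hsub := triRegion_subsingleton (v := v) (by omega)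
    have : interior (triRegion v) ⊆ interior {p} :=
      interior_mono fun q hq => hsub hq hp'
    simpa [interior_singleton] using this hp
  · intro hv
    set c : ℝ := ((sumv v : ℝ) + 1) / 3
    have hc : 0 < c ∧ c < 1 := by
      rcases hv with h | h <;> simp only [c, h] <;> norm_num
    obtain ⟨p, hp⟩ := exists_lineF_eq (fun i => v i - c) (by simp only [c]; linarith)
    let O : Set (ℝ × ℝ) := ⋂ j, lineF j ⁻¹' Set.Ioo ((v j : ℝ) - 1) (v j)
    have hO : IsOpen O := isOpen_iInter_of_finite fun j => isOpen_Ioo.preimage (continuous_lineF j)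
    have hOsub : O ⊆ triRegion v := fun q hq j =>
      ⟨(Set.mem_iInter.mp hq j).1.le, (Set.mem_iInter.mp hq j).2.le⟩
    refine ⟨p, interior_maximal hOsub hO (Set.mem_iInter.mpr fun j => ?_)⟩
    simp only [Set.mem_preimage, hp, Set.mem_Ioo]
    constructor <;> linarith

lemma le_add_one_of_region_inter_nonempty {T U : Tile} (h : (T.region ∩ U.region).Nonempty)
    (i : Fin 3) : U.val i ≤ T.val i + 1 := by
  obtain ⟨p, hpT, hpU⟩ := h
  have : (U.val i : ℝ) ≤ T.val i + 1 := by linarith [(hpT i).2, (hpU i).1]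
  exact_mod_cast this

lemma edgeAdj_of_eq_update {T U : Tile} {j : Fin 3} (hT : sumv T.val = 0)
    (hU : U.val = Function.update T.val j (T.val j + 1)) : EdgeAdj T U := by
  have hne : T ≠ U := fun h => by
    have := congrFun hU j
    rw [← h] at this
    simp at this
  refine ⟨hne, Set.not_subsingleton_iff.mpr ?_⟩
  -- the common edge is the segment of the line `lineF j = T j` swept out by `θ ∈ [0, 1]`
  have edge_point : ∀ θ : ℝ, 0 ≤ θ → θ ≤ 1 →
      ∃ p ∈ T.region ∩ U.region, lineF (j + 1) p = T.val (j + 1) - θ := by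
    intro θ h0 h1
    let t : Fin 3 → ℝ := fun i =>
      T.val i - if i = j then 0 else if i = j + 1 then θ else 1 - θ
    have ht : t 0 + t 1 + t 2 = -1 := by
      have : ((sumv T.val : ℤ) : ℝ) = 0 := by simp [hT]
      push_cast [sumv] at this
      fin_cases j <;> simp [t] <;> linarith
    obtain ⟨p, hp⟩ := exists_lineF_eq t ht
    refine ⟨p, ⟨fun i => ?_, fun i => ?_⟩, by simp [hp, t]⟩
    · simp only [hp, t]; split_ifs <;> constructor <;> linarith
    · simp only [hp, t, hU, Function.update_apply]
      split_ifs <;> subst_vars <;> push_cast <;> constructor <;> linarith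
  obtain ⟨p, hp, hp'⟩ := edge_point 0 le_rfl zero_le_one
  obtain ⟨q, hq, hq'⟩ := edge_point 1 zero_le_one le_rfl
  exact ⟨p, hp, q, hq, fun h => by rw [h] at hp'; linarith⟩

def tileVec (i : Fin 3) (a b s : ℤ) : Fin 3 → ℤ := fun x =>
  if x = i then a else if x = i + 1 then b else s - a - b

@[simp] lemma tileVec_self (i : Fin 3) (a b s : ℤ) : tileVec i a b s i = a := by simp [tileVec]

lemma sumv_tileVec (i : Fin 3) (a b s : ℤ) : sumv (tileVec i a b s) = s := by
  fin_cases i <;> simp [tileVec, sumv]; ring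

lemma tileVec_eq (i : Fin 3) (v : Fin 3 → ℤ) : tileVec i (v i) (v (i + 1)) (sumv v) = v := by
  funext x; fin_cases i <;> fin_cases x <;> simp [tileVec, sumv] <;> ring

-- A tile of coordinate sum `0` is cut out by the upper bounds `lineF j ≤ v j` alone.
def downTile (i : Fin 3) (a b : ℤ) : Tile :=
  ⟨tileVec i a b 0, (isTile_iff _).mpr (.inl (sumv_tileVec i a b 0))⟩

def upTile (i : Fin 3) (a b : ℤ) : Tile :=
  ⟨tileVec i a b 1, (isTile_iff _).mpr (.inr (sumv_tileVec i a b 1))⟩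

@[simp] lemma downTile_val_self (i : Fin 3) (a b : ℤ) : (downTile i a b).val i = a :=
  tileVec_self ..

@[simp] lemma upTile_val_self (i : Fin 3) (a b : ℤ) : (upTile i a b).val i = a :=
  tileVec_self ..

lemma edgeAdj_downTile_upTile (i : Fin 3) (a b : ℤ) : EdgeAdj (downTile i a b) (upTile i a b) :=
  edgeAdj_of_eq_update (j := i + 2) (sumv_tileVec i a b 0) <| by
    funext x
    fin_cases i <;> fin_cases x <;> simp [downTile, upTile, tileVec, Function.update] <;> ring

lemma edgeAdj_downTile_upTile_add_one_left (i : Fin 3) (a b : ℤ) :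
    EdgeAdj (downTile i a b) (upTile i (a + 1) b) :=
  edgeAdj_of_eq_update (j := i) (sumv_tileVec i a b 0) <| by
    funext x
    fin_cases i <;> fin_cases x <;> simp [downTile, upTile, tileVec, Function.update]

lemma edgeAdj_downTile_upTile_add_one_right (i : Fin 3) (a b : ℤ) :
    EdgeAdj (downTile i a b) (upTile i a (b + 1)) :=
  edgeAdj_of_eq_update (j := i + 1) (sumv_tileVec i a b 0) <| by
    funext x
    fin_cases i <;> fin_cases x <;> simp [downTile, upTile, tileVec, Function.update] <;> ring

lemma eq_downTile_or_eq_upTile (i : Fin 3) (T : Tile) :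
    T = downTile i (T.val i) (T.val (i + 1)) ∨ T = upTile i (T.val i) (T.val (i + 1)) := by
  rcases (isTile_iff _).mp T.2 with h | h <;> [left; right] <;>
    exact Subtype.ext ((tileVec_eq i T.val).symm.trans (congrArg _ h))

open Relation in
lemma reflTransGen_of_forall_add_one {α : Type*} {r : α → α → Prop} [Std.Symm r]
    {S : Set ℤ} (hS : S.OrdConnected) (f : ℤ → α)
    (h : ∀ n ∈ S, n + 1 ∈ S → ReflTransGen r (f n) (f (n + 1))) {m n : ℤ} (hm : m ∈ S)
    (hn : n ∈ S) : ReflTransGen r (f m) (f n) := by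
  have step : ∀ {x y : ℤ}, x ∈ S → y ∈ S → ∀ k ∈ Set.Ico x y,
      ReflTransGen r (f k) (f (Order.succ k)) := fun hx hy k hk => by
    rw [Order.succ_eq_add_one]
    exact h k (hS.out hx hy (Set.Ico_subset_Icc_self hk))
      (hS.out hx hy ⟨by linarith [hk.1], Order.add_one_le_of_lt hk.2⟩)
  exact ReflTransGen.lift' f le_rfl m n <|
    reflTransGen_of_succ _ (step hm hn) fun k hk => symm (step hn hm k hk)

def EdgeAdjIn (A : Set Tile) (T U : Tile) : Prop := T ∈ A ∧ U ∈ A ∧ EdgeAdj T U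

instance (A : Set Tile) : Std.Symm (EdgeAdjIn A) :=
  ⟨fun _ _ ⟨hT, hU, h⟩ => ⟨hU, hT, dualGraph.adj_symm h⟩⟩

section Slab

open Relation

variable (i : Fin 3) {S : Set ℤ}

lemma reflTransGen_downTile_right {a : ℤ} (ha : a ∈ S) (b b' : ℤ) :
    ReflTransGen (EdgeAdjIn {T : Tile | T.val i ∈ S}) (downTile i a b) (downTile i a b') :=
  reflTransGen_of_forall_add_one Set.ordConnected_univ (downTile i a)
    (fun n _ _ =>
      .tail (.single ⟨by simpa, by simpa, edgeAdj_downTile_upTile_add_one_right i a n⟩)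
        ⟨by simpa, by simpa, dualGraph.adj_symm (edgeAdj_downTile_upTile i a (n + 1))⟩)
    trivial trivial

lemma reflTransGen_downTile_left (hS : S.OrdConnected) {a a' : ℤ} (ha : a ∈ S) (ha' : a' ∈ S)
    (b : ℤ) :
    ReflTransGen (EdgeAdjIn {T : Tile | T.val i ∈ S}) (downTile i a b) (downTile i a' b) :=
  reflTransGen_of_forall_add_one hS (downTile i · b)
    (fun n hn hn' =>
      .tail (.single ⟨by simpa, by simpa, edgeAdj_downTile_upTile_add_one_left i n b⟩)
        ⟨by simpa, by simpa, dualGraph.adj_symm (edgeAdj_downTile_upTile i (n + 1) b)⟩)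
    ha ha'

lemma reflTransGen_downTile (T : Tile) (hT : T.val i ∈ S) :
    ReflTransGen (EdgeAdjIn {T : Tile | T.val i ∈ S}) T
      (downTile i (T.val i) (T.val (i + 1))) := by
  rcases eq_downTile_or_eq_upTile i T with h | h
  · rw [← h]
  · have hadj := edgeAdj_downTile_upTile i (T.val i) (T.val (i + 1))
    rw [← h] at hadj
    exact .single ⟨hT, by simpa, dualGraph.adj_symm hadj⟩

theorem edgeConnSet_slab (hS : S.OrdConnected) : EdgeConnSet {T : Tile | T.val i ∈ S} :=
  fun T hT U hU =>
    (reflTransGen_downTile i T hT).trans <| (reflTransGen_downTile_left i hS hT hU _).trans <|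
      (reflTransGen_downTile_right i hU _ _).trans <| symm (reflTransGen_downTile i U hU)

end Slab

lemma val_le_add_one_of_edgeAdj {T U : Tile} (h : EdgeAdj T U) (i : Fin 3) :
    U.val i ≤ T.val i + 1 :=
  le_add_one_of_region_inter_nonempty (Set.not_subsingleton_iff.mp h.2).nonempty i

lemma cutGraph_adj_iff (i : Fin 3) (k : ℤ) (T U : Tile) :
    (cutGraph i k).Adj T U ↔ EdgeAdj T U ∧ (T.val i ≤ k ↔ U.val i ≤ k) := by
  constructor
  · rintro ⟨h, hTU, hUT⟩
    have := val_le_add_one_of_edgeAdj h i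
    have := val_le_add_one_of_edgeAdj (dualGraph.adj_symm h) i
    exact ⟨h, by omega⟩
  · rintro ⟨h, hTU⟩
    exact ⟨h, by omega, by omega⟩

lemma cutGraph_reachable_iff (i : Fin 3) (k : ℤ) (T U : Tile) :
    (cutGraph i k).Reachable T U ↔ (T.val i ≤ k ↔ U.val i ≤ k) := by
  rw [SimpleGraph.reachable_iff_reflTransGen]
  constructor
  · intro h
    induction h with
    | refl => rfl
    | tail _ hadj ih => exact ih.trans ((cutGraph_adj_iff i k _ _).mp hadj).2
  · intro hTU
    by_cases hT : T.val i ≤ k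
    · refine Relation.ReflTransGen.mono ?_ T U
        (edgeConnSet_slab i Set.ordConnected_Iic T hT U (hTU.mp hT))
      rintro x y ⟨hx, hy, h⟩
      exact (cutGraph_adj_iff i k x y).mpr ⟨h, iff_of_true hx hy⟩
    · have hU : ¬U.val i ≤ k := mt hTU.mpr hT
      refine Relation.ReflTransGen.mono ?_ T U
        (edgeConnSet_slab i Set.ordConnected_Ioi T (not_le.mp hT) U (not_le.mp hU))
      rintro x y ⟨hx, hy, h⟩
      exact (cutGraph_adj_iff i k x y).mpr ⟨h, iff_of_false (not_le.mpr hx) (not_le.mpr hy)⟩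

theorem halfspaces_of_hyperplane (i : Fin 3) (k : ℤ) :
    EdgeConnSet {T : Tile | k + 1 ≤ T.val i} ∧
    EdgeConnSet {T : Tile | T.val i ≤ k} ∧
    (∀ T U : Tile, EdgeAdj T U → T.val i ≤ k → k + 1 ≤ U.val i →
      T.val i = k ∧ U.val i = k + 1) ∧
    (∃ T : Tile, T.val i ≤ k) ∧ (∃ T : Tile, k + 1 ≤ T.val i) ∧
    (∀ T U : Tile, (cutGraph i k).Reachable T U ↔ (T.val i ≤ k ↔ U.val i ≤ k)) := by
  refine ⟨edgeConnSet_slab i Set.ordConnected_Ici, edgeConnSet_slab i Set.ordConnected_Iic,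
    fun T U h hT hU => ?_, ⟨downTile i k 0, by simp⟩, ⟨downTile i (k + 1) 0, by simp⟩,
    cutGraph_reachable_iff i k⟩
  have := val_le_add_one_of_edgeAdj h i
  omega
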